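/- Let M = [m_{ij}] be an n×n real Nekrasov matrix with m_{ii} = 1 for all i. Then for every diagonal matrix D = diag(d_1,…,d_n) with 0 ≤ d_i ≤ 1 for all i, the matrix I − D + DM is invertible and ‖(I − D + DM)^{-1}‖_∞ ≤ max_{1 ≤ i ≤ n} η_i(M)/(1 − h_i(M)). -/

import Mathlib

/-!
If `A x = b` and `A` is Nekrasov, a forward sweep over the rows gives
`‖a_ii‖ ‖x_i‖ ≤ ‖b‖ z_i(A) + ‖x‖ h_i(A)`, where `z = nekZ A` is the recursion of `h` with the
upper sums replaced by `1`. At a coordinate where `‖x_i‖ = ‖x‖` this reads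
`‖x‖ ≤ ‖b‖ z_i / (‖a_ii‖ - h_i)`, which gives both invertibility and the bound on `‖A⁻¹‖_∞`.
For `B = I - D + D M` with unit diagonal the off-diagonal entries are `d_i m_ij`, so the
recursions for `B` are dominated by those for `M`: `h_i(B) ≤ h_i(M)` and
`z_i(B) ≤ z_i(M) = η_i(M)`.
-/

open Finset

noncomputable def nekH {n : ℕ} {𝕜 : Type*} [RCLike 𝕜] (A : Matrix (Fin n) (Fin n) 𝕜) : Fin n → ℝ
  | i =>
    (∑ j : Fin n, if h : j < i then ‖A i j‖ / ‖A j j‖ * nekH A j else 0)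
      + ∑ j : Fin n, if i < j then ‖A i j‖ else 0
termination_by i => i.val
decreasing_by exact h

def IsNekrasov {n : ℕ} {𝕜 : Type*} [RCLike 𝕜] (A : Matrix (Fin n) (Fin n) 𝕜) : Prop :=
  ∀ i, nekH A i < ‖A i i‖

noncomputable def nekZ {n : ℕ} {𝕜 : Type*} [RCLike 𝕜] (A : Matrix (Fin n) (Fin n) 𝕜) : Fin n → ℝ
  | i => (∑ j : Fin n, if h : j < i then ‖A i j‖ / ‖A j j‖ * nekZ A j else 0) + 1
termination_by i => i.val
decreasing_by exact h

noncomputable def nekEta {n : ℕ} {𝕜 : Type*} [RCLike 𝕜] (M : Matrix (Fin n) (Fin n) 𝕜) : Fin n → ℝ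
  | i => (∑ j : Fin n, if h : j < i then ‖M i j‖ / min ‖M j j‖ 1 * nekEta M j else 0) + 1
termination_by i => i.val
decreasing_by exact h

noncomputable def linftyNorm {n : ℕ} {𝕜 : Type*} [RCLike 𝕜] (A : Matrix (Fin n) (Fin n) 𝕜) : ℝ :=
  ⨆ i, ∑ j, ‖A i j‖

noncomputable def rPlus {n : ℕ} (M : Matrix (Fin n) (Fin n) ℝ) (i : Fin n) : ℝ :=
  Finset.fold max 0 (fun j => M i j) (Finset.univ.erase i)

noncomputable def BPlus {n : ℕ} (M : Matrix (Fin n) (Fin n) ℝ) : Matrix (Fin n) (Fin n) ℝ :=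
  Matrix.of fun i j => M i j - rPlus M i

def IsBNekrasov {n : ℕ} (M : Matrix (Fin n) (Fin n) ℝ) : Prop :=
  IsNekrasov (BPlus M) ∧ ∀ i, 0 < BPlus M i i

def IsLCPSolution {n : ℕ} (M : Matrix (Fin n) (Fin n) ℝ) (q x : Fin n → ℝ) : Prop :=
  (∀ i, 0 ≤ x i) ∧ (∀ i, 0 ≤ (M.mulVec x + q) i) ∧ ∑ i, (M.mulVec x + q) i * x i = 0

def IsPMatrix {n : ℕ} (M : Matrix (Fin n) (Fin n) ℝ) : Prop :=
  ∀ S : Finset (Fin n), 0 < (M.submatrix (fun i : S => (i : Fin n)) (fun j : S => (j : Fin n))).det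



open Matrix

lemma sum_univ_eq_sum_Iio_add_add_sum_Ioi {n : ℕ} {M : Type*} [AddCommMonoid M]
    (f : Fin n → M) (i : Fin n) :
    ∑ j, f j = ∑ j ∈ Iio i, f j + f i + ∑ j ∈ Ioi i, f j := by
  rw [← sum_filter_add_sum_filter_not univ (· < i), filter_gt_eq_Iio, add_assoc]
  congr 1
  simp_rw [not_lt]
  rw [filter_le_eq_Ici, ← Ioi_insert, sum_insert (by simp)]

section Nekrasov

variable {n : ℕ} {𝕜 : Type*} [RCLike 𝕜]

lemma nekH_eq (A : Matrix (Fin n) (Fin n) 𝕜) (i : Fin n) :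
    nekH A i = ∑ j ∈ Iio i, ‖A i j‖ / ‖A j j‖ * nekH A j + ∑ j ∈ Ioi i, ‖A i j‖ := by
  rw [nekH]
  simp only [dite_eq_ite, ← sum_filter, filter_gt_eq_Iio, filter_lt_eq_Ioi]

lemma nekZ_eq (A : Matrix (Fin n) (Fin n) 𝕜) (i : Fin n) :
    nekZ A i = ∑ j ∈ Iio i, ‖A i j‖ / ‖A j j‖ * nekZ A j + 1 := by
  rw [nekZ]
  simp only [dite_eq_ite, ← sum_filter, filter_gt_eq_Iio]

lemma nekEta_eq (M : Matrix (Fin n) (Fin n) 𝕜) (i : Fin n) :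
    nekEta M i = ∑ j ∈ Iio i, ‖M i j‖ / min ‖M j j‖ 1 * nekEta M j + 1 := by
  rw [nekEta]
  simp only [dite_eq_ite, ← sum_filter, filter_gt_eq_Iio]

lemma nekH_nonneg (A : Matrix (Fin n) (Fin n) 𝕜) (i : Fin n) : 0 ≤ nekH A i := by
  induction i using WellFoundedLT.induction with
  | _ i ih =>
    rw [nekH_eq]
    exact add_nonneg (sum_nonneg fun j hj => mul_nonneg (by positivity) (ih j (mem_Iio.1 hj)))
      (sum_nonneg fun _ _ => norm_nonneg _)

lemma nekZ_nonneg (A : Matrix (Fin n) (Fin n) 𝕜) (i : Fin n) : 0 ≤ nekZ A i := by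
  induction i using WellFoundedLT.induction with
  | _ i ih =>
    rw [nekZ_eq]
    exact add_nonneg (sum_nonneg fun j hj => mul_nonneg (by positivity) (ih j (mem_Iio.1 hj)))
      zero_le_one

lemma nekEta_eq_nekZ {M : Matrix (Fin n) (Fin n) 𝕜} (hM : ∀ j, ‖M j j‖ ≤ 1) (i : Fin n) :
    nekEta M i = nekZ M i := by
  induction i using WellFoundedLT.induction with
  | _ i ih =>
    rw [nekEta_eq, nekZ_eq]
    congr 1
    exact sum_congr rfl fun j hj => by rw [min_eq_left (hM j), ih j (mem_Iio.1 hj)]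

lemma nekH_le_nekH {A B : Matrix (Fin n) (Fin n) 𝕜} (hA : ∀ j, 0 < ‖A j j‖)
    (hdiag : ∀ j, ‖A j j‖ ≤ ‖B j j‖) (hoff : ∀ i j, i ≠ j → ‖B i j‖ ≤ ‖A i j‖) (i : Fin n) :
    nekH B i ≤ nekH A i := by
  induction i using WellFoundedLT.induction with
  | _ i ih =>
    rw [nekH_eq, nekH_eq]
    gcongr with j hj j hj
    · exact nekH_nonneg B j
    · exact hA j
    · exact hoff i j (mem_Iio.1 hj).ne'
    · exact hdiag j
    · exact ih j (mem_Iio.1 hj)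
    · exact hoff i j (mem_Ioi.1 hj).ne

lemma nekZ_le_nekZ {A B : Matrix (Fin n) (Fin n) 𝕜} (hA : ∀ j, 0 < ‖A j j‖)
    (hdiag : ∀ j, ‖A j j‖ ≤ ‖B j j‖) (hoff : ∀ i j, i ≠ j → ‖B i j‖ ≤ ‖A i j‖) (i : Fin n) :
    nekZ B i ≤ nekZ A i := by
  induction i using WellFoundedLT.induction with
  | _ i ih =>
    rw [nekZ_eq, nekZ_eq]
    gcongr with j hj
    · exact nekZ_nonneg B j
    · exact hA j
    · exact hoff i j (mem_Iio.1 hj).ne'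
    · exact hdiag j
    · exact ih j (mem_Iio.1 hj)

lemma norm_diag_mul_norm_le_nekZ_add_nekH {A : Matrix (Fin n) (Fin n) 𝕜} (hA : ∀ j, A j j ≠ 0)
    {x : Fin n → 𝕜} {c t : ℝ} (hc : ∀ j, ‖(A *ᵥ x) j‖ ≤ c) (ht : ∀ j, ‖x j‖ ≤ t) (i : Fin n) :
    ‖A i i‖ * ‖x i‖ ≤ c * nekZ A i + t * nekH A i := by
  induction i using WellFoundedLT.induction with
  | _ i ih =>
    have hrow : A i i * x i =
        (A *ᵥ x) i - (∑ j ∈ Iio i, A i j * x j + ∑ j ∈ Ioi i, A i j * x j) := by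
      rw [mulVec, dotProduct, sum_univ_eq_sum_Iio_add_add_sum_Ioi _ i]
      ring
    have hlower : ∀ j ∈ Iio i,
        ‖A i j * x j‖ ≤ ‖A i j‖ / ‖A j j‖ * (c * nekZ A j + t * nekH A j) := fun j hj => by
      rw [norm_mul, div_mul_eq_mul_div, le_div_iff₀ (norm_pos_iff.2 (hA j)), mul_assoc,
        mul_comm ‖x j‖]
      exact mul_le_mul_of_nonneg_left (ih j (mem_Iio.1 hj)) (norm_nonneg _)
    have hupper : ∀ j ∈ Ioi i, ‖A i j * x j‖ ≤ ‖A i j‖ * t := fun j _ => by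
      rw [norm_mul]
      exact mul_le_mul_of_nonneg_left (ht j) (norm_nonneg _)
    calc ‖A i i‖ * ‖x i‖
        = ‖(A *ᵥ x) i - (∑ j ∈ Iio i, A i j * x j + ∑ j ∈ Ioi i, A i j * x j)‖ := by
          rw [← norm_mul, hrow]
      _ ≤ c + (∑ j ∈ Iio i, ‖A i j‖ / ‖A j j‖ * (c * nekZ A j + t * nekH A j)
            + ∑ j ∈ Ioi i, ‖A i j‖ * t) := by
          refine (norm_sub_le _ _).trans (add_le_add (hc i) ((norm_add_le _ _).trans ?_))
          exact add_le_add ((norm_sum_le _ _).trans (sum_le_sum hlower))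
            ((norm_sum_le _ _).trans (sum_le_sum hupper))
      _ = c * nekZ A i + t * nekH A i := by
          simp only [nekZ_eq A i, nekH_eq A i, mul_add, sum_add_distrib, mul_sum]
          simp only [mul_left_comm _ c, mul_left_comm _ t, mul_comm _ t]
          ring

theorem IsNekrasov.norm_le_mul_norm_mulVec {A : Matrix (Fin n) (Fin n) 𝕜} (hA : IsNekrasov A)
    {K : ℝ} (hK : ∀ i, nekZ A i / (‖A i i‖ - nekH A i) ≤ K) (x : Fin n → 𝕜) :
    ‖x‖ ≤ K * ‖A *ᵥ x‖ := by
  rcases isEmpty_or_nonempty (Fin n) with _ | _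
  · simp [Subsingleton.elim x 0]
  obtain ⟨i, -, hi⟩ := exists_max_image univ (fun j => ‖x j‖) univ_nonempty
  have hgap : 0 < ‖A i i‖ - nekH A i := sub_pos.2 (hA i)
  have hdiag : ∀ j, A j j ≠ 0 := fun j => norm_pos_iff.1 ((nekH_nonneg A j).trans_lt (hA j))
  have key := norm_diag_mul_norm_le_nekZ_add_nekH hdiag (fun j => norm_le_pi_norm (A *ᵥ x) j)
    (fun j => hi j (mem_univ j)) i
  calc ‖x‖ ≤ ‖x i‖ := (pi_norm_le_iff_of_nonneg (norm_nonneg _)).2 fun j => hi j (mem_univ j)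
    _ ≤ nekZ A i / (‖A i i‖ - nekH A i) * ‖A *ᵥ x‖ := by
      rw [div_mul_eq_mul_div, le_div_iff₀ hgap]
      linarith
    _ ≤ K * ‖A *ᵥ x‖ := mul_le_mul_of_nonneg_right (hK i) (norm_nonneg _)

theorem IsNekrasov.det_ne_zero {A : Matrix (Fin n) (Fin n) 𝕜} (hA : IsNekrasov A) : A.det ≠ 0 := by
  intro hdet
  obtain ⟨v, hv0, hv⟩ := exists_mulVec_eq_zero_iff.2 hdet
  have hbound := hA.norm_le_mul_norm_mulVec
    (K := ∑ i, |nekZ A i / (‖A i i‖ - nekH A i)|)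
    (fun i => (le_abs_self _).trans
      (single_le_sum (f := fun i => |nekZ A i / (‖A i i‖ - nekH A i)|)
        (fun j _ => abs_nonneg _) (mem_univ i))) v
  rw [hv, norm_zero, mul_zero] at hbound
  exact hv0 (norm_le_zero_iff.1 hbound)

open scoped Matrix.Norms.Operator in
lemma linftyNorm_le_of_norm_mulVec_le {A : Matrix (Fin n) (Fin n) 𝕜} {K : ℝ} (hK : 0 ≤ K)
    (h : ∀ y, ‖A *ᵥ y‖ ≤ K * ‖y‖) : linftyNorm A ≤ K := by
  have hA : ‖A‖ ≤ K := by
    rw [linfty_opNorm_eq_opNorm]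
    exact ContinuousLinearMap.opNorm_le_bound _ hK h
  refine Real.iSup_le (fun i => le_trans ?_ hA) hK
  have hrow : ∑ j, ‖A i j‖₊ ≤ ‖A‖₊ :=
    linfty_opNNNorm_def A ▸ le_sup (f := fun i => ∑ j, ‖A i j‖₊) (mem_univ i)
  simpa only [← NNReal.coe_le_coe, NNReal.coe_sum, coe_nnnorm] using hrow

theorem IsNekrasov.linftyNorm_inv_le [Nonempty (Fin n)] {A : Matrix (Fin n) (Fin n) 𝕜}
    (hA : IsNekrasov A) {K : ℝ} (hK : ∀ i, nekZ A i / (‖A i i‖ - nekH A i) ≤ K) :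
    linftyNorm A⁻¹ ≤ K := by
  have hunit : IsUnit A.det := isUnit_iff_ne_zero.2 hA.det_ne_zero
  obtain ⟨i⟩ := ‹Nonempty (Fin n)›
  have hK0 : 0 ≤ K := (div_nonneg (nekZ_nonneg A i) (sub_pos.2 (hA i)).le).trans (hK i)
  refine linftyNorm_le_of_norm_mulVec_le hK0 fun y => ?_
  simpa [mulVec_mulVec, mul_nonsing_inv A hunit] using
    hA.norm_le_mul_norm_mulVec hK (A⁻¹ *ᵥ y)

end Nekrasov

lemma one_sub_diagonal_add_diagonal_mul_apply_of_ne {ι R : Type*} [Fintype ι] [DecidableEq ι]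
    [Ring R] (d : ι → R) (M : Matrix ι ι R) {i j : ι} (hij : i ≠ j) :
    (1 - diagonal d + diagonal d * M) i j = d i * M i j := by
  simp [hij, diagonal_mul]

theorem stmt10 {n : ℕ} (hn : 0 < n) (M : Matrix (Fin n) (Fin n) ℝ)
    (hdiag : ∀ i, M i i = 1) (hNek : IsNekrasov M)
    (d : Fin n → ℝ) (hd : ∀ i, 0 ≤ d i ∧ d i ≤ 1) :
    IsUnit (1 - Matrix.diagonal d + Matrix.diagonal d * M).det ∧
      linftyNorm (1 - Matrix.diagonal d + Matrix.diagonal d * M)⁻¹ ≤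
        Finset.univ.sup' ⟨⟨0, hn⟩, Finset.mem_univ _⟩
          (fun i => nekEta M i / (1 - nekH M i)) := by
  have : Nonempty (Fin n) := ⟨⟨0, hn⟩⟩
  set B := 1 - diagonal d + diagonal d * M with hB
  have hMdiag : ∀ j, ‖M j j‖ = 1 := by simp [hdiag]
  have hBdiag : ∀ j, ‖B j j‖ = 1 := by simp [hB, hdiag]
  have hBoff : ∀ i j, i ≠ j → ‖B i j‖ ≤ ‖M i j‖ := fun i j hij => by
    rw [hB, one_sub_diagonal_add_diagonal_mul_apply_of_ne d M hij, norm_mul,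
      Real.norm_of_nonneg (hd i).1]
    exact mul_le_of_le_one_left (norm_nonneg _) (hd i).2
  have hMpos : ∀ j, 0 < ‖M j j‖ := by simp [hMdiag]
  have hdiag_le : ∀ j, ‖M j j‖ ≤ ‖B j j‖ := by simp [hMdiag, hBdiag]
  have hH := nekH_le_nekH hMpos hdiag_le hBoff
  have hMgap : ∀ i, 0 < 1 - nekH M i := fun i => sub_pos.2 (hMdiag i ▸ hNek i)
  have hBNek : IsNekrasov B := fun i => by
    rw [hBdiag]
    exact (hH i).trans_lt (sub_pos.1 (hMgap i))
  refine ⟨isUnit_iff_ne_zero.2 hBNek.det_ne_zero, hBNek.linftyNorm_inv_le fun i => ?_⟩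
  refine le_sup'_of_le _ (mem_univ i) ?_
  rw [hBdiag, nekEta_eq_nekZ (fun j => (hMdiag j).le)]
  exact div_le_div₀ (nekZ_nonneg M i) (nekZ_le_nekZ hMpos hdiag_le hBoff i) (hMgap i)
    (by linarith [hH i])
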